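/- There is no field automorphism σ of an algebraically closed field ℓ of characteristic 0 with σ² = id, σ ≠ id, whose restriction to ℚ(√2) ⊆ ℓ sends √2 to −√2. (Equivalently: the automorphism of ℚ(√2) swapping ±√2 does not extend to an involution of any algebraically closed field containing ℚ(√2).) -/
import Mathlib

private lemma sq_eq_cases' {K : Type*} [Field K] {a b : K} (h : a ^ 2 = b ^ 2) :
    a = b ∨ a = -b := by
  have h0 : (a - b) * (a + b) = 0 := by linear_combination h
  rcases mul_eq_zero.mp h0 with h1 | h1
  · left; exact sub_eq_zero.mp h1
  · right; exact eq_neg_of_add_eq_zero_left h1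

/-- No involutory automorphism `σ ≠ id` of an algebraically
closed field `ℓ` of characteristic 0 can send a square root of 2 to its
negative, i.e. the automorphism of `ℚ(√2)` swapping `±√2` does not extend
to an involution of any algebraically closed field. -/
theorem no_involution_extending_sqrt2_swap
    (ℓ : Type*) [Field ℓ] [IsAlgClosed ℓ] [CharZero ℓ]
    (σ : ℓ →+* ℓ) (hinv : ∀ a : ℓ, σ (σ a) = a) (hne : σ ≠ RingHom.id ℓ)
    (s : ℓ) (hs : s ^ 2 = 2) :
    σ s ≠ -s := by
  intro hσs
  obtain ⟨i, hi⟩ := IsAlgClosed.exists_pow_nat_eq (-1 : ℓ) (n := 2) (by norm_num)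
  have hi0 : i ≠ 0 := by
    intro h; rw [h] at hi; norm_num at hi
  have hσi2 : (σ i) ^ 2 = i ^ 2 := by
    rw [← map_pow, hi, map_neg, map_one]
  rcases sq_eq_cases' hσi2 with hσi | hσi
  · -- Case σ i = i : take w with w² = s, derive σ² w = -w.
    obtain ⟨w, hw⟩ := IsAlgClosed.exists_pow_nat_eq s (n := 2) (by norm_num)
    have hw0 : w ≠ 0 := by
      intro h; rw [h] at hw
      have : s ^ 2 = 0 := by rw [← hw]; ring
      rw [hs] at this; norm_num at this
    have h1 : (σ w) ^ 2 = (i * w) ^ 2 := by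
      rw [← map_pow, hw, hσs, mul_pow, hi, hw]; ring
    have h2 := hinv w
    rcases sq_eq_cases' h1 with h | h
    · rw [h, map_mul, hσi, h] at h2
      have : w * (1 + 1) = 0 := by linear_combination -h2 + w * hi
      rcases mul_eq_zero.mp this with h' | h'
      · exact hw0 h'
      · norm_num at h'
    · rw [h, map_neg, map_mul, hσi, h] at h2
      have : w * (1 + 1) = 0 := by linear_combination -h2 + w * hi
      rcases mul_eq_zero.mp this with h' | h'
      · exact hw0 h'
      · norm_num at h'
  · -- Case σ i = -i : z = (s+1)i has z·σz = -1; take w² = z; m = w·σw is fixed with m² = -1.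
    set z : ℓ := (s + 1) * i with hz
    have hzσz : z * σ z = -1 := by
      have : σ z = (s - 1) * i := by
        rw [hz, map_mul, map_add, map_one, hσs, hσi]; ring
      rw [hz, this]
      have : (s + 1) * i * ((s - 1) * i) = (s ^ 2 - 1) * i ^ 2 := by ring
      rw [this, hs, hi]; ring
    obtain ⟨w, hw⟩ := IsAlgClosed.exists_pow_nat_eq z (n := 2) (by norm_num)
    set m : ℓ := w * σ w with hm
    have hmfix : σ m = m := by rw [hm, map_mul, hinv]; ring
    have hm2 : m ^ 2 = i ^ 2 := by
      rw [hm, hi, mul_pow, ← map_pow, hw, hzσz]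
    have h2i : i + i ≠ 0 := by
      intro h
      have : i * (1 + 1) = 0 := by linear_combination h
      rcases mul_eq_zero.mp this with h' | h'
      · exact hi0 h'
      · norm_num at h'
    rcases sq_eq_cases' hm2 with h | h
    · rw [h, hσi] at hmfix
      exact h2i (by linear_combination -hmfix)
    · rw [h, map_neg, hσi, neg_neg] at hmfix
      exact h2i (by linear_combination hmfix)
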